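/- arXiv:2601.04850 — 7 statements merged into one kernel-verified Lean document; each statement's English description precedes it below -/
import Mathlib

section
/- Let m ≥ 1 and l ∈ ℕ, n ≥ 1, and suppose 0 < p_k < 1 for all l ≤ k ≤ l+n−1. Then ∑_{k=l}^{l+n−1} ∫_k^{k+1} ν^{m·t} · P_k · p_k^{t−k} · log(1/p_k) dt = ∑_{k=l}^{l+n−1} ν^{m·k} · P_k · (1 − ν^m · p_k) · log(p_k) / log(ν^m · p_k). (This is the m-th moment of ν^{T_x} restricted to the event {l ≤ T_x < l+n} under the constant force of mortality assumption.) -/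
/-! On `[k, k + 1)` the constant-force density is `P_k p_k ^ (t - k) log (1 / p_k)`, so after
the shift `t = k + s` each year's integrand is a constant times the exponential
`(ν ^ m p_k) ^ s`, whose integral over `[0, 1]` is `(ν ^ m p_k - 1) / log (ν ^ m p_k)`. -/

open Real intervalIntegral

theorem integral_const_rpow {c : ℝ} (hc : 0 < c) (hc1 : c ≠ 1) (a b : ℝ) :
    ∫ t in a..b, c ^ t = (c ^ b - c ^ a) / log c := by
  have hlog : log c ≠ 0 := log_ne_zero_of_pos_of_ne_one hc hc1
  have hderiv (t : ℝ) : HasDerivAt (fun s : ℝ => c ^ s / log c) (c ^ t) t := by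
    simpa [hlog] using (hasStrictDerivAt_const_rpow hc t).hasDerivAt.div_const (log c)
  rw [integral_eq_sub_of_hasDerivAt (fun t _ => hderiv t)
    ((continuous_const_rpow hc.ne').intervalIntegrable a b), sub_div]

theorem integral_discount_mul_constant_force_density {v q : ℝ} (hv : 0 < v) (hq : 0 < q)
    (hvq : v * q ≠ 1) (P a : ℝ) :
    ∫ t in a..a + 1, v ^ t * (P * q ^ (t - a) * log (1 / q))
      = v ^ a * P * (1 - v * q) * log q / log (v * q) := by
  have hshift (s : ℝ) : v ^ (s + a) * (P * q ^ (s + a - a) * log (1 / q))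
      = -(v ^ a * P * log q) * (v * q) ^ s := by
    rw [add_sub_cancel_right, rpow_add hv, mul_rpow hv.le hq.le, one_div, log_inv]
    ring
  have hsub := integral_comp_add_right (fun t => v ^ t * (P * q ^ (t - a) * log (1 / q)))
    (a := 0) (b := 1) a
  rw [zero_add, add_comm 1 a] at hsub
  rw [← hsub]
  simp only [hshift, integral_const_mul, integral_const_rpow (mul_pos hv hq) hvq, rpow_one,
    rpow_zero]
  ring

theorem net_single_premium_pure_endowment_general
    (p : ℕ → ℝ) (ν : ℝ) (hν : ν ∈ Set.Ioo (0 : ℝ) 1)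
    (m l n : ℕ)
    (hp : ∀ k, l ≤ k → k < l + n → 0 < p k ∧ p k < 1) :
    ∑ k ∈ Finset.Ico l (l + n),
      ∫ t in (k : ℝ)..((k : ℝ) + 1),
        ν ^ ((m : ℝ) * t) *
          ((∏ i ∈ Finset.range k, p i) * p k ^ (t - (k : ℝ)) * Real.log (1 / p k))
    = ∑ k ∈ Finset.Ico l (l + n),
        ν ^ ((m : ℝ) * (k : ℝ)) * (∏ i ∈ Finset.range k, p i) *
          (1 - ν ^ (m : ℝ) * p k) * Real.log (p k) / Real.log (ν ^ (m : ℝ) * p k) := by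
  simp_rw [rpow_mul hν.1.le]
  refine Finset.sum_congr rfl fun k hk => ?_
  obtain ⟨hk_lo, hk_hi⟩ := Finset.mem_Ico.mp hk
  obtain ⟨hpk_pos, hpk_lt_one⟩ := hp k hk_lo hk_hi
  have hv_pos : 0 < ν ^ (m : ℝ) := rpow_pos_of_pos hν.1 _
  have hv_le_one : ν ^ (m : ℝ) ≤ 1 := rpow_le_one hν.1.le hν.2.le m.cast_nonneg
  have hvp_lt_one : ν ^ (m : ℝ) * p k < 1 :=
    mul_lt_one_of_nonneg_of_lt_one_right hv_le_one hpk_pos.le hpk_lt_one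
  exact integral_discount_mul_constant_force_density hv_pos hpk_pos hvp_lt_one.ne _ _

/-- m-th moment of ν^{T_x} restricted to {l ≤ T_x < l+n} under the
constant force of mortality assumption. -/
theorem net_single_premium_pure_endowment
    (p : ℕ → ℝ) (ν : ℝ) (hν : ν ∈ Set.Ioo (0 : ℝ) 1)
    (m l n : ℕ) (hm : 1 ≤ m) (hn : 1 ≤ n)
    (hp : ∀ k, l ≤ k → k < l + n → 0 < p k ∧ p k < 1) :
    ∑ k ∈ Finset.Ico l (l + n),
      ∫ t in (k : ℝ)..((k : ℝ) + 1),
        ν ^ ((m : ℝ) * t) *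
          ((∏ i ∈ Finset.range k, p i) * p k ^ (t - (k : ℝ)) * Real.log (1 / p k))
    = ∑ k ∈ Finset.Ico l (l + n),
        ν ^ ((m : ℝ) * (k : ℝ)) * (∏ i ∈ Finset.range k, p i) *
          (1 - ν ^ (m : ℝ) * p k) * Real.log (p k) / Real.log (ν ^ (m : ℝ) * p k) :=
  net_single_premium_pure_endowment_general p ν hν m l n hp
end

section
/- Let m ≥ 1 and l ∈ ℕ, n ≥ 1, and suppose 0 < p_k < 1 for all l ≤ k ≤ l+n−1. Then ∑_{k=l}^{l+n−1} ∫_k^{k+1} t^m · P_k · p_k^{t−k} · log(1/p_k) dt = ∑_{k=l}^{l+n−1} P_k · (Γ(m+1, k·log(1/p_k)) − Γ(m+1, (k+1)·log(1/p_k))) / (p_k^k · (log(1/p_k))^m). (This is the m-th moment of the future lifetime T_x restricted to {l ≤ T_x < l+n} under the constant force of mortality assumption.) -/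
open Real Finset MeasureTheory

/-- The upper incomplete gamma function Γ(a, x) = ∫_x^∞ t^{a−1} e^{−t} dt. -/
noncomputable def upperGamma (a x : ℝ) : ℝ :=
  ∫ t in Set.Ioi x, t ^ (a - 1) * Real.exp (-t)

/-! Under constant force of mortality `μ = log (1 / p)` the density on `[k, k + 1)` is a multiple
of `e^{-μ t}`, so after the substitution `u = μ t` each summand becomes a difference of two
values of `Γ(m + 1, ·)`. -/

theorem integrableOn_rpow_mul_exp_neg_Ioi {s a : ℝ} (hs : 0 < s) (ha : 0 ≤ a) :
    IntegrableOn (fun t => t ^ (s - 1) * exp (-t)) (Set.Ioi a) := by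
  simpa only [mul_comm] using (GammaIntegral_convergent hs).mono_set (Set.Ioi_subset_Ioi ha)

theorem upperGamma_sub_upperGamma {s a b : ℝ} (hs : 0 < s) (ha : 0 ≤ a) (hb : 0 ≤ b) :
    upperGamma s a - upperGamma s b = ∫ t in a..b, t ^ (s - 1) * exp (-t) :=
  intervalIntegral.integral_Ioi_sub_Ioi' (integrableOn_rpow_mul_exp_neg_Ioi hs ha)
    (integrableOn_rpow_mul_exp_neg_Ioi hs hb)

theorem integral_pow_mul_exp_neg_mul {c : ℝ} (hc : c ≠ 0) (m : ℕ) (a b : ℝ) :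
    ∫ t in a..b, t ^ m * exp (-(c * t)) =
      (∫ u in c * a..c * b, u ^ m * exp (-u)) / c ^ (m + 1) := by
  have h := intervalIntegral.integral_comp_mul_left (a := a) (b := b)
    (fun u => u ^ m * exp (-u)) hc
  simp only [mul_pow, mul_assoc, intervalIntegral.integral_const_mul, smul_eq_mul] at h
  rw [eq_inv_mul_iff_mul_eq₀ hc] at h
  rw [eq_div_iff (pow_ne_zero _ hc), ← h]
  ring

theorem rpow_sub_natCast_eq_exp_div {p : ℝ} (hp : 0 < p) (t : ℝ) (k : ℕ) :
    p ^ (t - k) = exp (-(log (1 / p) * t)) / p ^ k := by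
  rw [rpow_sub hp, rpow_natCast, rpow_def_of_pos hp, one_div, log_inv, neg_mul, neg_neg]

theorem integral_pow_mul_constForce_density_eq_upperGamma_sub {p : ℝ} (hp0 : 0 < p)
    (hp1 : p < 1) (P : ℝ) (m k : ℕ) :
    ∫ t in (k : ℝ)..((k : ℝ) + 1), t ^ m * (P * p ^ (t - (k : ℝ)) * log (1 / p)) =
      P * (upperGamma ((m : ℝ) + 1) ((k : ℝ) * log (1 / p)) -
          upperGamma ((m : ℝ) + 1) (((k : ℝ) + 1) * log (1 / p))) /
        (p ^ k * log (1 / p) ^ m) := by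
  set μ := log (1 / p)
  have hμ : 0 < μ := log_pos (one_lt_one_div hp0 hp1)
  calc ∫ t in (k : ℝ)..((k : ℝ) + 1), t ^ m * (P * p ^ (t - (k : ℝ)) * μ)
      = P * μ / p ^ k * ∫ t in (k : ℝ)..((k : ℝ) + 1), t ^ m * exp (-(μ * t)) := by
        rw [← intervalIntegral.integral_const_mul]
        refine intervalIntegral.integral_congr fun t _ => ?_
        rw [rpow_sub_natCast_eq_exp_div hp0]
        ring
    _ = P * μ / p ^ k * ((∫ u in μ * k..μ * (k + 1), u ^ m * exp (-u)) / μ ^ (m + 1)) := by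
        rw [integral_pow_mul_exp_neg_mul hμ.ne']
    _ = _ := by
        rw [upperGamma_sub_upperGamma (by positivity) (by positivity) (by positivity),
          add_sub_cancel_right]
        simp only [rpow_natCast, mul_comm μ]
        field_simp
        ring

theorem moment_future_lifetime_general
    (p : ℕ → ℝ) (m l n : ℕ)
    (hp : ∀ k, l ≤ k → k < l + n → 0 < p k ∧ p k < 1) :
    ∑ k ∈ Finset.Ico l (l + n),
      ∫ t in (k : ℝ)..((k : ℝ) + 1),
        t ^ m *
          ((∏ i ∈ Finset.range k, p i) * p k ^ (t - (k : ℝ)) * Real.log (1 / p k))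
    = ∑ k ∈ Finset.Ico l (l + n),
        (∏ i ∈ Finset.range k, p i) *
          (upperGamma ((m : ℝ) + 1) ((k : ℝ) * Real.log (1 / p k)) -
            upperGamma ((m : ℝ) + 1) (((k : ℝ) + 1) * Real.log (1 / p k))) /
          (p k ^ k * Real.log (1 / p k) ^ m) := by
  refine Finset.sum_congr rfl fun k hk => ?_
  obtain ⟨hp0, hp1⟩ := hp k (Finset.mem_Ico.1 hk).1 (Finset.mem_Ico.1 hk).2
  exact integral_pow_mul_constForce_density_eq_upperGamma_sub hp0 hp1 _ m k

/-- m-th moment of the future lifetime T_x restricted to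
{l ≤ T_x < l+n} under the constant force of mortality assumption. -/
theorem moment_future_lifetime
    (p : ℕ → ℝ) (m l n : ℕ) (hm : 1 ≤ m) (hn : 1 ≤ n)
    (hp : ∀ k, l ≤ k → k < l + n → 0 < p k ∧ p k < 1) :
    ∑ k ∈ Finset.Ico l (l + n),
      ∫ t in (k : ℝ)..((k : ℝ) + 1),
        t ^ m *
          ((∏ i ∈ Finset.range k, p i) * p k ^ (t - (k : ℝ)) * Real.log (1 / p k))
    = ∑ k ∈ Finset.Ico l (l + n),
        (∏ i ∈ Finset.range k, p i) *
          (upperGamma ((m : ℝ) + 1) ((k : ℝ) * Real.log (1 / p k)) -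
            upperGamma ((m : ℝ) + 1) (((k : ℝ) + 1) * Real.log (1 / p k))) /
          (p k ^ k * Real.log (1 / p k) ^ m) :=
  moment_future_lifetime_general p m l n hp
end

section
/- Let l ∈ ℕ, n ≥ 1, and suppose 0 < p_k < 1 for all l ≤ k ≤ l+n−1. Then the partial expected future lifetime satisfies ∑_{k=l}^{l+n−1} ∫_k^{k+1} t · P_k · p_k^{t−k} · log(1/p_k) dt = ∑_{k=l}^{l+n−1} P_k · (q_k + (k·q_k − p_k)·log(1/p_k)) / log(1/p_k), where q_k = 1 − p_k. -/
open Real Finset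

lemma hasDerivAt_rpow_sub_mul_inv_log_sub {q : ℝ} (hq : 0 < q) (hq1 : q ≠ 1) (a t : ℝ) :
    HasDerivAt (fun s : ℝ => q ^ (s - a) * ((Real.log q)⁻¹ - s))
      (t * (q ^ (t - a) * Real.log (1 / q))) t := by
  have hlog : Real.log q ≠ 0 := Real.log_ne_zero_of_pos_of_ne_one hq hq1
  have hpow : HasDerivAt (fun s : ℝ => q ^ (s - a)) (q ^ (t - a) * Real.log q) t := by
    have h := (Real.hasStrictDerivAt_const_rpow hq (t - a)).hasDerivAt.comp t
      ((hasDerivAt_id t).sub_const a)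
    rwa [mul_one] at h
  refine (hpow.mul ((hasDerivAt_const t (Real.log q)⁻¹).sub (hasDerivAt_id t))).congr_deriv ?_
  simp only [Pi.sub_apply, id, one_div, Real.log_inv]
  field_simp
  ring

lemma integral_mul_rpow_sub_mul_log {q : ℝ} (hq : 0 < q) (hq1 : q ≠ 1) (a : ℝ) :
    ∫ t in a..a + 1, t * (q ^ (t - a) * Real.log (1 / q))
      = ((1 - q) + (a * (1 - q) - q) * Real.log (1 / q)) / Real.log (1 / q) := by
  have hlog : Real.log q ≠ 0 := Real.log_ne_zero_of_pos_of_ne_one hq hq1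
  rw [intervalIntegral.integral_eq_sub_of_hasDerivAt
      (fun t _ => hasDerivAt_rpow_sub_mul_inv_log_sub hq hq1 a t)
      (Continuous.intervalIntegrable (by fun_prop (disch := positivity)) _ _)]
  rw [add_sub_cancel_left, sub_self, Real.rpow_one, Real.rpow_zero, one_div, Real.log_inv]
  field_simp
  ring

theorem partial_expected_future_lifetime_general
    (p : ℕ → ℝ) (l n : ℕ)
    (hp : ∀ k, l ≤ k → k < l + n → 0 < p k ∧ p k < 1) :
    ∑ k ∈ Finset.Ico l (l + n),
      ∫ t in (k : ℝ)..((k : ℝ) + 1),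
        t * ((∏ i ∈ Finset.range k, p i) * p k ^ (t - (k : ℝ)) * Real.log (1 / p k))
    = ∑ k ∈ Finset.Ico l (l + n),
        (∏ i ∈ Finset.range k, p i) *
          ((1 - p k) + ((k : ℝ) * (1 - p k) - p k) * Real.log (1 / p k)) /
          Real.log (1 / p k) := by
  refine Finset.sum_congr rfl fun k hk => ?_
  obtain ⟨hlk, hkn⟩ := Finset.mem_Ico.mp hk
  obtain ⟨hpos, hlt⟩ := hp k hlk hkn
  have hfactor : ∀ t : ℝ,
      t * ((∏ i ∈ Finset.range k, p i) * p k ^ (t - (k : ℝ)) * Real.log (1 / p k))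
        = (∏ i ∈ Finset.range k, p i) * (t * (p k ^ (t - (k : ℝ)) * Real.log (1 / p k))) :=
    fun t => by ring
  rw [intervalIntegral.integral_congr fun t _ => hfactor t, intervalIntegral.integral_const_mul,
    integral_mul_rpow_sub_mul_log hpos hlt.ne, mul_div_assoc]

/-- partial expected future lifetime (first moment of T_x restricted
to {l ≤ T_x < l+n}) under the constant force of mortality assumption. -/
theorem partial_expected_future_lifetime
    (p : ℕ → ℝ) (l n : ℕ) (hn : 1 ≤ n)
    (hp : ∀ k, l ≤ k → k < l + n → 0 < p k ∧ p k < 1) :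
    ∑ k ∈ Finset.Ico l (l + n),
      ∫ t in (k : ℝ)..((k : ℝ) + 1),
        t * ((∏ i ∈ Finset.range k, p i) * p k ^ (t - (k : ℝ)) * Real.log (1 / p k))
    = ∑ k ∈ Finset.Ico l (l + n),
        (∏ i ∈ Finset.range k, p i) *
          ((1 - p k) + ((k : ℝ) * (1 - p k) - p k) * Real.log (1 / p k)) /
          Real.log (1 / p k) :=
  partial_expected_future_lifetime_general p l n hp
end

section
/- Let l ∈ ℕ, n ≥ 1, and suppose 0 < p_k < 1 for all l ≤ k ≤ l+n−1. Then the second moment of the restricted future lifetime satisfies ∑_{k=l}^{l+n−1} ∫_k^{k+1} t² · P_k · p_k^{t−k} · log(1/p_k) dt = ∑_{k=l}^{l+n−1} P_k · (2q_k − 2(q_k·k − p_k)·log(p_k) + (k² − (1+k)²·p_k)·(log p_k)²) / (log p_k)², where q_k = 1 − p_k. -/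
open Real Finset

/- The antiderivative comes from integrating by parts twice. -/
theorem hasDerivAt_sq_mul_exp_antideriv {c : ℝ} (hc : c ≠ 0) (a t : ℝ) :
    HasDerivAt (fun t => exp (c * (t - a)) * (t ^ 2 - 2 * t / c + 2 / c ^ 2) / c)
      (t ^ 2 * exp (c * (t - a))) t := by
  have hexp : HasDerivAt (fun t => exp (c * (t - a))) (exp (c * (t - a)) * c) t := by
    simpa using (((hasDerivAt_id t).sub_const a).const_mul c).exp
  have hpoly : HasDerivAt (fun t => t ^ 2 - 2 * t / c + 2 / c ^ 2) (2 * t - 2 / c) t := by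
    simpa using (((hasDerivAt_pow 2 t).sub (((hasDerivAt_id t).const_mul 2).div_const c)).add_const
      (2 / c ^ 2))
  refine ((hexp.mul hpoly).div_const c).congr_deriv ?_
  field_simp
  ring

theorem integral_sq_mul_rpow_sub {b : ℝ} (hb : 0 < b) (hb1 : b ≠ 1) (a : ℝ) :
    ∫ t in a..a + 1, t ^ 2 * b ^ (t - a) =
      (b * ((a + 1) ^ 2 - 2 * (a + 1) / log b + 2 / log b ^ 2) -
        (a ^ 2 - 2 * a / log b + 2 / log b ^ 2)) / log b := by
  have hlog : log b ≠ 0 := log_ne_zero_of_pos_of_ne_one hb hb1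
  have hrpow : ∀ t : ℝ, b ^ (t - a) = exp (log b * (t - a)) := fun t => rpow_def_of_pos hb _
  simp only [hrpow]
  rw [intervalIntegral.integral_eq_sub_of_hasDerivAt
    (fun t _ => hasDerivAt_sq_mul_exp_antideriv hlog a t)
    ((by fun_prop : Continuous _).intervalIntegrable _ _)]
  simp only [add_sub_cancel_left, sub_self, mul_one, mul_zero, exp_zero, exp_log hb, one_mul]
  ring

theorem second_moment_future_lifetime_general
    (p : ℕ → ℝ) (l n : ℕ)
    (hp : ∀ k, l ≤ k → k < l + n → 0 < p k ∧ p k < 1) :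
    ∑ k ∈ Finset.Ico l (l + n),
      ∫ t in (k : ℝ)..((k : ℝ) + 1),
        t ^ 2 * ((∏ i ∈ Finset.range k, p i) * p k ^ (t - (k : ℝ)) * Real.log (1 / p k))
    = ∑ k ∈ Finset.Ico l (l + n),
        (∏ i ∈ Finset.range k, p i) *
          (2 * (1 - p k) - 2 * ((1 - p k) * (k : ℝ) - p k) * Real.log (p k) +
            ((k : ℝ) ^ 2 - (1 + (k : ℝ)) ^ 2 * p k) * Real.log (p k) ^ 2) /
          Real.log (p k) ^ 2 := by
  refine Finset.sum_congr rfl fun k hk => ?_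
  obtain ⟨hlk, hkn⟩ := Finset.mem_Ico.mp hk
  obtain ⟨hp0, hp1⟩ := hp k hlk hkn
  have hlog : log (p k) ≠ 0 := (log_neg hp0 hp1).ne
  have hintegrand : ∀ t : ℝ,
      t ^ 2 * ((∏ i ∈ Finset.range k, p i) * p k ^ (t - k) * log (1 / p k)) =
        -((∏ i ∈ Finset.range k, p i) * log (p k)) * (t ^ 2 * p k ^ (t - k)) := by
    intro t
    rw [one_div, log_inv]
    ring
  simp only [hintegrand, intervalIntegral.integral_const_mul,
    integral_sq_mul_rpow_sub hp0 hp1.ne]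
  field_simp
  ring

/-- second moment of the future lifetime T_x restricted to
{l ≤ T_x < l+n} under the constant force of mortality assumption. -/
theorem second_moment_future_lifetime
    (p : ℕ → ℝ) (l n : ℕ) (hn : 1 ≤ n)
    (hp : ∀ k, l ≤ k → k < l + n → 0 < p k ∧ p k < 1) :
    ∑ k ∈ Finset.Ico l (l + n),
      ∫ t in (k : ℝ)..((k : ℝ) + 1),
        t ^ 2 * ((∏ i ∈ Finset.range k, p i) * p k ^ (t - (k : ℝ)) * Real.log (1 / p k))
    = ∑ k ∈ Finset.Ico l (l + n),
        (∏ i ∈ Finset.range k, p i) *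
          (2 * (1 - p k) - 2 * ((1 - p k) * (k : ℝ) - p k) * Real.log (p k) +
            ((k : ℝ) ^ 2 - (1 + (k : ℝ)) ^ 2 * p k) * Real.log (p k) ^ 2) /
          Real.log (p k) ^ 2 :=
  second_moment_future_lifetime_general p l n hp
end

section
/- Fix k ∈ ℕ, let 0 < p_k < 1 and P_k > 0, and let g : ℝ → ℝ be differentiable on [k, k+1]. If g′(t) ≤ 0 for all t ∈ [k, k+1], then ∫_k^{k+1} g(t) · P_k · p_k^{t−k} · log(1/p_k) dt ≤ ∫_k^{k+1} g(t) · P_k·p_k · (1−p_k) / (1 − (k+1−t)·(1−p_k))² dt; if instead g′(t) ≥ 0 for all t ∈ [k, k+1], the reverse inequality holds. (That is, the expectation of a non-increasing function of the future lifetime under the constant force of mortality assumption (C) is at most the corresponding expectation under Balducci's assumption (B), with the inequality reversed for non-decreasing functions.) -/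
/-!
Both densities are minus the derivatives of the survival functions
`S_C t = P * p ^ (t - k)` and `S_B t = P * p / (1 - (k + 1 - t) * (1 - p))`, which agree at both
ends of `[k, k + 1]`. Integrating by parts, `∫ g f_C - ∫ g f_B = ∫ g' (S_C - S_B)`, and
`S_B ≤ S_C` is the weighted AM-GM inequality `p ^ (1 - s) ≤ (1 - s) * p + s` for `s = t - k`.
So the sign of `g'` decides the sign of the difference.
-/

open Real MeasureTheory intervalIntegral Set

theorem integral_mul_density_le_of_survival_le {a b : ℝ} (hab : a ≤ b)
    {g g' S₁ S₂ f₁ f₂ : ℝ → ℝ}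
    (hg : ∀ t ∈ Icc a b, HasDerivWithinAt g (g' t) (Icc a b) t)
    (hg' : ∀ t ∈ Icc a b, g' t ≤ 0)
    (hS₁ : ∀ t ∈ Icc a b, HasDerivWithinAt S₁ (-f₁ t) (Icc a b) t)
    (hS₂ : ∀ t ∈ Icc a b, HasDerivWithinAt S₂ (-f₂ t) (Icc a b) t)
    (hf₁ : IntervalIntegrable f₁ volume a b) (hf₂ : IntervalIntegrable f₂ volume a b)
    (ha : S₁ a = S₂ a) (hb : S₁ b = S₂ b) (hS : ∀ t ∈ Icc a b, S₂ t ≤ S₁ t) :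
    ∫ t in a..b, g t * f₁ t ≤ ∫ t in a..b, g t * f₂ t := by
  rw [← uIcc_of_le hab] at hg hS₁ hS₂
  have hgc : ContinuousOn g (uIcc a b) := fun t ht ↦ (hg t ht).continuousWithinAt
  have hg'_int : IntervalIntegrable g' volume a b := by
    have hderiv : ∀ t ∈ Ioo (min a b) (max a b), HasDerivAt (-g) ((-g') t) t := fun t ht ↦
      ((hg t (mem_Icc_of_Ioo ht)).hasDerivAt (Icc_mem_nhds ht.1 ht.2)).neg
    simpa using (intervalIntegrable_deriv_of_nonneg (g' := -g') hgc.neg hderiv fun t ht ↦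
      neg_nonneg.2 (hg' t (by simpa [hab] using mem_Icc_of_Ioo ht))).neg
  have ibp := integral_mul_deriv_eq_deriv_mul_of_hasDerivWithinAt hg
    (fun t ht ↦ ((hS₂ t ht).sub (hS₁ t ht)).congr_deriv (neg_sub_neg _ _)) hg'_int
    (hf₁.sub hf₂)
  simp only [Pi.sub_apply, ha, hb, sub_self, mul_zero] at ibp
  have hnonneg : 0 ≤ ∫ t in a..b, g' t * (S₂ t - S₁ t) :=
    integral_nonneg hab fun t ht ↦
      mul_nonneg_of_nonpos_of_nonpos (hg' t ht) (sub_nonpos.2 (hS t ht))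
  rw [← sub_nonpos, ← integral_sub (hf₁.continuousOn_mul hgc) (hf₂.continuousOn_mul hgc)]
  simp only [← mul_sub]
  linarith

section Survival

variable (P p a : ℝ)

noncomputable def constForceSurvival (t : ℝ) : ℝ := P * p ^ (t - a)

noncomputable def balducciSurvival (t : ℝ) : ℝ := P * p / (1 - (a + 1 - t) * (1 - p))

variable {P p a}

theorem hasDerivAt_constForceSurvival (hp : 0 < p) (t : ℝ) :
    HasDerivAt (constForceSurvival P p a) (-(P * p ^ (t - a) * log (1 / p))) t := by
  have h := (((hasDerivAt_id t).sub_const a).const_rpow hp).const_mul P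
  rw [one_div, log_inv]
  exact h.congr_deriv (by simp; ring)

theorem balducci_denom_pos (hp : 0 < p) {t : ℝ} (ht : t ∈ Icc a (a + 1)) :
    0 < 1 - (a + 1 - t) * (1 - p) := by
  nlinarith [ht.1, ht.2, mul_nonneg (sub_nonneg.2 ht.2) hp.le, mul_nonneg (sub_nonneg.2 ht.1) hp.le]

theorem hasDerivAt_balducciSurvival {t : ℝ} (ht : 1 - (a + 1 - t) * (1 - p) ≠ 0) :
    HasDerivAt (balducciSurvival P p a)
      (-(P * p * (1 - p) / (1 - (a + 1 - t) * (1 - p)) ^ 2)) t := by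
  have hD : HasDerivAt (fun t ↦ 1 - (a + 1 - t) * (1 - p)) (1 - p) t := by
    simpa using (((hasDerivAt_id t).const_sub (a + 1)).mul_const (1 - p)).const_sub 1
  exact ((hasDerivAt_const t (P * p)).div hD ht).congr_deriv (by ring)

theorem balducciSurvival_le_constForceSurvival (hp : 0 < p) (hP : 0 ≤ P) {t : ℝ}
    (ht : t ∈ Icc a (a + 1)) : balducciSurvival P p a t ≤ constForceSurvival P p a t := by
  have hD := balducci_denom_pos hp ht
  unfold balducciSurvival constForceSurvival
  set s := t - a with hs
  have hDs : 1 - (a + 1 - t) * (1 - p) = (1 - s) * p + s * 1 := by rw [hs]; ring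
  have amgm : p ^ (1 - s) * 1 ^ s ≤ (1 - s) * p + s * 1 :=
    geom_mean_le_arith_mean2_weighted (by linarith [ht.2]) (by linarith [ht.1]) hp.le zero_le_one
      (by ring)
  rw [one_rpow, mul_one, rpow_sub hp, rpow_one, div_le_iff₀ (rpow_pos_of_pos hp s), ← hDs]
    at amgm
  rw [mul_div_assoc]
  gcongr
  rwa [div_le_iff₀ hD, mul_comm]

theorem integral_mul_constForceDensity_le_balducciDensity (hp : 0 < p) (hP : 0 ≤ P)
    {g g' : ℝ → ℝ} (hg : ∀ t ∈ Icc a (a + 1), HasDerivWithinAt g (g' t) (Icc a (a + 1)) t)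
    (hg' : ∀ t ∈ Icc a (a + 1), g' t ≤ 0) :
    ∫ t in a..(a + 1), g t * (P * p ^ (t - a) * log (1 / p))
      ≤ ∫ t in a..(a + 1), g t * (P * p * (1 - p) / (1 - (a + 1 - t) * (1 - p)) ^ 2) := by
  have hD : ∀ t ∈ uIcc a (a + 1), 1 - (a + 1 - t) * (1 - p) ≠ 0 := fun t ht ↦
    (balducci_denom_pos hp (by rwa [uIcc_of_le (by linarith)] at ht)).ne'
  refine integral_mul_density_le_of_survival_le (by linarith) hg hg'
    (fun t _ ↦ (hasDerivAt_constForceSurvival hp t).hasDerivWithinAt)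
    (fun t ht ↦ (hasDerivAt_balducciSurvival (balducci_denom_pos hp ht).ne').hasDerivWithinAt)
    ?_ ?_ ?_ ?_ (fun t ht ↦ balducciSurvival_le_constForceSurvival hp hP ht)
  · exact (continuous_const.mul ((continuous_const_rpow hp.ne').comp (continuous_sub_right a))
      |>.mul continuous_const).intervalIntegrable _ _
  · exact (continuousOn_const.div (by fun_prop) fun t ht ↦
      pow_ne_zero 2 (hD t ht)).intervalIntegrable
  · simp [constForceSurvival, balducciSurvival, hp.ne']
  · simp [constForceSurvival, balducciSurvival]

end Survival

theorem constant_force_le_balducci_general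
    (k : ℕ) (p P : ℝ) (hp0 : 0 < p) (hP : 0 < P)
    (g g' : ℝ → ℝ)
    (hg : ∀ t ∈ Set.Icc (k : ℝ) ((k : ℝ) + 1),
      HasDerivWithinAt g (g' t) (Set.Icc (k : ℝ) ((k : ℝ) + 1)) t) :
    ((∀ t ∈ Set.Icc (k : ℝ) ((k : ℝ) + 1), g' t ≤ 0) →
      (∫ t in (k : ℝ)..((k : ℝ) + 1),
          g t * (P * p ^ (t - (k : ℝ)) * Real.log (1 / p)))
        ≤ ∫ t in (k : ℝ)..((k : ℝ) + 1),
            g t * (P * p * (1 - p) / (1 - ((k : ℝ) + 1 - t) * (1 - p)) ^ 2)) ∧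
    ((∀ t ∈ Set.Icc (k : ℝ) ((k : ℝ) + 1), 0 ≤ g' t) →
      (∫ t in (k : ℝ)..((k : ℝ) + 1),
          g t * (P * p * (1 - p) / (1 - ((k : ℝ) + 1 - t) * (1 - p)) ^ 2))
        ≤ ∫ t in (k : ℝ)..((k : ℝ) + 1),
            g t * (P * p ^ (t - (k : ℝ)) * Real.log (1 / p))) := by
  refine ⟨integral_mul_constForceDensity_le_balducciDensity hp0 hP.le hg, fun hg' ↦ ?_⟩
  have h := integral_mul_constForceDensity_le_balducciDensity (g := -g) (g' := -g') hp0 hP.le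
    (fun t ht ↦ (hg t ht).neg) fun t ht ↦ neg_nonpos.2 (hg' t ht)
  simpa only [Pi.neg_apply, neg_mul, intervalIntegral.integral_neg, neg_le_neg_iff] using h

/-- on [k, k+1], the expectation of a non-increasing differentiable
function under the constant force of mortality density is at most the expectation
under Balducci's density, and the inequality reverses for non-decreasing functions. -/
theorem constant_force_le_balducci
    (k : ℕ) (p P : ℝ) (hp0 : 0 < p) (hp1 : p < 1) (hP : 0 < P)
    (g g' : ℝ → ℝ)
    (hg : ∀ t ∈ Set.Icc (k : ℝ) ((k : ℝ) + 1),
      HasDerivWithinAt g (g' t) (Set.Icc (k : ℝ) ((k : ℝ) + 1)) t) :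
    ((∀ t ∈ Set.Icc (k : ℝ) ((k : ℝ) + 1), g' t ≤ 0) →
      (∫ t in (k : ℝ)..((k : ℝ) + 1),
          g t * (P * p ^ (t - (k : ℝ)) * Real.log (1 / p)))
        ≤ ∫ t in (k : ℝ)..((k : ℝ) + 1),
            g t * (P * p * (1 - p) / (1 - ((k : ℝ) + 1 - t) * (1 - p)) ^ 2)) ∧
    ((∀ t ∈ Set.Icc (k : ℝ) ((k : ℝ) + 1), 0 ≤ g' t) →
      (∫ t in (k : ℝ)..((k : ℝ) + 1),
          g t * (P * p * (1 - p) / (1 - ((k : ℝ) + 1 - t) * (1 - p)) ^ 2))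
        ≤ ∫ t in (k : ℝ)..((k : ℝ) + 1),
            g t * (P * p ^ (t - (k : ℝ)) * Real.log (1 / p))) :=
  constant_force_le_balducci_general k p P hp0 hP g g' hg
end

section
/- Fix k ∈ ℕ, let 0 < p_k < 1 and P_k > 0, and let g : ℝ → ℝ be differentiable on [k, k+1]. If g′(t) ≤ 0 for all t ∈ [k, k+1], then ∫_k^{k+1} g(t) · P_k · (1 − p_k) dt ≤ ∫_k^{k+1} g(t) · P_k · p_k^{t−k} · log(1/p_k) dt; if instead g′(t) ≥ 0 for all t ∈ [k, k+1], the reverse inequality holds. (That is, the expectation of a non-increasing function of the future lifetime under the uniform distribution of deaths assumption (UDD) is at most the corresponding expectation under the constant force of mortality assumption (C), with the inequality reversed for non-decreasing functions.) -/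
/-!
The two expectations differ by `∫ g h`, where `h = f_C - f_UDD` is decreasing in `t` and
integrates to zero over `[k, k + 1]`. Hence `h` vanishes at some `c`, being nonnegative before `c`
and nonpositive after, and `∫ g h = ∫ (g - g c) h`, whose integrand has constant sign when `g`
is monotone.
-/

open Real Set intervalIntegral

section SignChange

variable {a b : ℝ} {g h : ℝ → ℝ}

theorem exists_eq_zero_of_antitoneOn_of_integral_eq_zero (hab : a < b)
    (hh : AntitoneOn h (Icc a b)) (hhc : ContinuousOn h (Icc a b))
    (hint : ∫ t in a..b, h t = 0) : ∃ c ∈ Icc a b, h c = 0 := by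
  have hhi : IntervalIntegrable h MeasureTheory.volume a b :=
    hhc.intervalIntegrable_of_Icc hab.le
  have ha : 0 ≤ h a := by
    by_contra! ha
    have : ∫ t in a..b, h t ≤ ∫ _ in a..b, h a :=
      integral_mono_on hab.le hhi intervalIntegrable_const
        fun t ht => hh (left_mem_Icc.2 hab.le) ht ht.1
    rw [integral_const, smul_eq_mul, hint] at this
    nlinarith
  have hb : h b ≤ 0 := by
    by_contra! hb
    have : ∫ _ in a..b, h b ≤ ∫ t in a..b, h t :=
      integral_mono_on hab.le intervalIntegrable_const hhi
        fun t ht => hh ht (right_mem_Icc.2 hab.le) ht.2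
    rw [integral_const, smul_eq_mul, hint] at this
    nlinarith
  exact intermediate_value_Icc' hab.le hhc ⟨hb, ha⟩

theorem integral_mul_nonneg_of_antitoneOn (hab : a ≤ b)
    (hg : AntitoneOn g (Icc a b)) (hgc : ContinuousOn g (Icc a b))
    (hh : AntitoneOn h (Icc a b)) (hhc : ContinuousOn h (Icc a b))
    (hint : ∫ t in a..b, h t = 0) : 0 ≤ ∫ t in a..b, g t * h t := by
  rcases hab.eq_or_lt with rfl | hab
  · simp
  obtain ⟨c, hc, hc0⟩ := exists_eq_zero_of_antitoneOn_of_integral_eq_zero hab hh hhc hint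
  have hshift : ∫ t in a..b, g t * h t = ∫ t in a..b, (g t - g c) * h t := by
    simp_rw [sub_mul]
    rw [integral_sub (f := fun t => g t * h t) ((hgc.mul hhc).intervalIntegrable_of_Icc hab.le)
      ((hhc.intervalIntegrable_of_Icc hab.le).const_mul _), integral_const_mul, hint, mul_zero,
      sub_zero]
  rw [hshift]
  refine integral_nonneg hab.le fun t ht => ?_
  rcases le_total t c with htc | hct
  · exact mul_nonneg (sub_nonneg.2 (hg ht hc htc)) (hc0 ▸ hh ht hc htc)
  · exact mul_nonneg_of_nonpos_of_nonpos (sub_nonpos.2 (hg hc ht hct)) (hc0 ▸ hh hc ht hct)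

theorem integral_mul_nonpos_of_monotoneOn_of_antitoneOn (hab : a ≤ b)
    (hg : MonotoneOn g (Icc a b)) (hgc : ContinuousOn g (Icc a b))
    (hh : AntitoneOn h (Icc a b)) (hhc : ContinuousOn h (Icc a b))
    (hint : ∫ t in a..b, h t = 0) : ∫ t in a..b, g t * h t ≤ 0 := by
  have := integral_mul_nonneg_of_antitoneOn hab hg.neg hgc.neg hh hhc hint
  simpa only [Pi.neg_apply, neg_mul, integral_neg, neg_nonneg] using this

end SignChange

theorem integral_const_force_density {p : ℝ} (hp : 0 < p) (P x : ℝ) :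
    ∫ t in x..x + 1, P * p ^ (t - x) * log (1 / p) = P * (1 - p) := by
  have hderiv :
      ∀ t, HasDerivAt (fun t => -P * p ^ (t - x)) (P * p ^ (t - x) * log (1 / p)) t := by
    intro t
    refine ((((hasDerivAt_id' t).sub_const x).const_rpow hp).const_mul (-P)).congr_deriv ?_
    rw [one_div, log_inv]
    ring
  rw [integral_eq_sub_of_hasDerivAt (fun t _ => hderiv t)
    (Continuous.intervalIntegrable (by fun_prop (disch := exact hp.ne')) _ _)]
  simp only [add_sub_cancel_left, sub_self, rpow_one, rpow_zero]
  ring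

theorem antitone_const_force_density {p : ℝ} (hp0 : 0 < p) (hp1 : p ≤ 1) {P : ℝ}
    (hP : 0 ≤ P) (x : ℝ) : Antitone fun t => P * p ^ (t - x) * log (1 / p) := fun _ _ hst =>
  mul_le_mul_of_nonneg_right
    (mul_le_mul_of_nonneg_left (rpow_le_rpow_of_exponent_ge hp0 hp1 (sub_le_sub_right hst x)) hP)
    (log_nonneg (one_le_one_div hp0 hp1))

/-- on [k, k+1], the expectation of a non-increasing differentiable
function under the uniform distribution of deaths density is at most the expectation
under the constant force of mortality density, and the inequality reverses for
non-decreasing functions. -/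
theorem udd_le_constant_force
    (k : ℕ) (p P : ℝ) (hp0 : 0 < p) (hp1 : p < 1) (hP : 0 < P)
    (g g' : ℝ → ℝ)
    (hg : ∀ t ∈ Set.Icc (k : ℝ) ((k : ℝ) + 1),
      HasDerivWithinAt g (g' t) (Set.Icc (k : ℝ) ((k : ℝ) + 1)) t) :
    ((∀ t ∈ Set.Icc (k : ℝ) ((k : ℝ) + 1), g' t ≤ 0) →
      (∫ t in (k : ℝ)..((k : ℝ) + 1), g t * (P * (1 - p)))
        ≤ ∫ t in (k : ℝ)..((k : ℝ) + 1),
            g t * (P * p ^ (t - (k : ℝ)) * Real.log (1 / p))) ∧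
    ((∀ t ∈ Set.Icc (k : ℝ) ((k : ℝ) + 1), 0 ≤ g' t) →
      (∫ t in (k : ℝ)..((k : ℝ) + 1),
          g t * (P * p ^ (t - (k : ℝ)) * Real.log (1 / p)))
        ≤ ∫ t in (k : ℝ)..((k : ℝ) + 1), g t * (P * (1 - p))) := by
  set h : ℝ → ℝ := fun t => P * p ^ (t - k) * log (1 / p) - P * (1 - p)
  have hkk : (k : ℝ) ≤ k + 1 := by linarith
  have hhc : Continuous h := by fun_prop (disch := exact hp0.ne')
  have hh : AntitoneOn h (Icc (k : ℝ) (k + 1)) := fun _ _ _ _ hst =>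
    sub_le_sub_right (antitone_const_force_density hp0 hp1.le hP.le k hst) _
  have hint : ∫ t in (k : ℝ)..k + 1, h t = 0 := by
    rw [integral_sub (Continuous.intervalIntegrable (by fun_prop (disch := exact hp0.ne')) _ _)
      intervalIntegrable_const, integral_const_force_density hp0]
    simp
  have hgc : ContinuousOn g (Icc (k : ℝ) (k + 1)) := fun t ht => (hg t ht).continuousWithinAt
  have hgi : ∀ t ∈ interior (Icc (k : ℝ) (k + 1)),
      HasDerivWithinAt g (g' t) (interior (Icc (k : ℝ) (k + 1))) t := fun t ht =>
    (hg t (interior_subset ht)).mono interior_subset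
  have hdiff : ∫ t in (k : ℝ)..k + 1, g t * (P * p ^ (t - k) * log (1 / p))
      = (∫ t in (k : ℝ)..k + 1, g t * (P * (1 - p)))
        + ∫ t in (k : ℝ)..k + 1, g t * h t := by
    rw [← integral_add (f := fun t => g t * (P * (1 - p))) (g := fun t => g t * h t)
      ((hgc.mul continuousOn_const).intervalIntegrable_of_Icc hkk)
      ((hgc.mul hhc.continuousOn).intervalIntegrable_of_Icc hkk)]
    congr 1 with t
    simp only [h]
    ring
  refine ⟨fun hg' => ?_, fun hg' => ?_⟩
  · have hanti := antitoneOn_of_hasDerivWithinAt_nonpos (convex_Icc _ _) hgc hgi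
      fun t ht => hg' t (interior_subset ht)
    linarith [integral_mul_nonneg_of_antitoneOn hkk hanti hgc hh hhc.continuousOn hint]
  · have hmono := monotoneOn_of_hasDerivWithinAt_nonneg (convex_Icc _ _) hgc hgi
      fun t ht => hg' t (interior_subset ht)
    linarith [integral_mul_nonpos_of_monotoneOn_of_antitoneOn hkk hmono hgc hh
      hhc.continuousOn hint]
end

section
/- Let j ≥ 1, n ≥ 1, m ∈ ℕ, l ∈ ℕ, n₁ ∈ {0, 1, …, j−1}, ν ∈ (0,1), and suppose 0 < p_k < 1 for all l ≤ k ≤ l+n. Then ∑_{k=l}^{n+l−1} ∑_{d=n₁}^{j−1} ν^{m(k+(d+1)/j)} · ∫_{k+d/j}^{k+(d+1)/j} P_k · p_k^{t−k} · log(1/p_k) dt + ∑_{d=0}^{n₁−1} ν^{m(n+l+(d+1)/j)} · ∫_{n+l+d/j}^{n+l+(d+1)/j} P_{n+l} · p_{n+l}^{t−(n+l)} · log(1/p_{n+l}) dt = ∑_{k=l}^{n+l−1} ν^{m·k} · P_k · (1 − p_k^{1/j}) · ∑_{d=n₁}^{j−1} ν^{(d+1)m/j} · p_k^{d/j} + ν^{(n+l)m}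 · P_{n+l} · (1 − p_{n+l}^{1/j}) · ∑_{d=0}^{n₁−1} ν^{(d+1)m/j} · p_{n+l}^{d/j}. (This is the m-th moment of ν^{(⌊T_x·j⌋+1)/j} restricted to {l + n₁/j ≤ T_x < n + l + n₁/j} under the constant force of mortality assumption.) -/
/-! On `[k, k + 1)` the density `P_k p_k^(t-k) log(1/p_k)` has the primitive `-P_k p_k^(t-k)`, so the
integral over the `d`-th subinterval of length `1/j` is `P_k p_k^(d/j) (1 - p_k^(1/j))`. Splitting
`ν^(m(k + (d+1)/j)) = ν^(mk) ν^((d+1)m/j)` and factoring out of the sum over `d` gives the identity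
term by term. -/

open Real Finset

lemma hasDerivAt_neg_rpow_sub {p : ℝ} (hp : 0 < p) (c t : ℝ) :
    HasDerivAt (fun s => -p ^ (s - c)) (p ^ (t - c) * log (1 / p)) t := by
  rw [one_div, log_inv, mul_neg, ← mul_one (p ^ (t - c) * log p)]
  exact ((hasStrictDerivAt_const_rpow hp (t - c)).hasDerivAt.comp t
    ((hasDerivAt_id t).sub_const c)).neg

lemma integral_rpow_sub_mul_log_inv {p : ℝ} (hp : 0 < p) (c a b : ℝ) :
    ∫ t in a..b, p ^ (t - c) * log (1 / p) = p ^ (a - c) - p ^ (b - c) := by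
  have hcont : Continuous fun t => p ^ (t - c) * log (1 / p) :=
    (continuous_const.rpow (continuous_id.sub continuous_const) fun _ => Or.inl hp.ne').mul
      continuous_const
  rw [intervalIntegral.integral_eq_sub_of_hasDerivAt
    (fun t _ => hasDerivAt_neg_rpow_sub hp c t) (hcont.intervalIntegrable a b)]
  ring

lemma integral_survival_density_subinterval {p : ℝ} (hp : 0 < p) (P K D J : ℝ) :
    ∫ t in (K + D / J)..(K + (D + 1) / J), P * p ^ (t - K) * log (1 / p)
      = P * p ^ (D / J) * (1 - p ^ (1 / J)) := by
  simp_rw [mul_assoc]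
  rw [intervalIntegral.integral_const_mul, integral_rpow_sub_mul_log_inv hp,
    add_sub_cancel_left, add_sub_cancel_left, add_div, rpow_add hp]
  ring

lemma sum_discounted_integral_survival_density {ν p : ℝ} (hν : 0 < ν) (hp : 0 < p)
    (s : Finset ℕ) (P K M J : ℝ) :
    ∑ d ∈ s, ν ^ (M * (K + ((d : ℝ) + 1) / J)) *
        ∫ t in (K + (d : ℝ) / J)..(K + ((d : ℝ) + 1) / J), P * p ^ (t - K) * log (1 / p)
      = ν ^ (M * K) * P * (1 - p ^ (1 / J)) *
          ∑ d ∈ s, ν ^ (((d : ℝ) + 1) * M / J) * p ^ ((d : ℝ) / J) := by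
  rw [mul_sum]
  refine sum_congr rfl fun d _ => ?_
  rw [integral_survival_density_subinterval hp,
    show M * (K + ((d : ℝ) + 1) / J) = M * K + ((d : ℝ) + 1) * M / J by ring, rpow_add hν]
  ring

theorem moment_mthly_insurance_general
    (p : ℕ → ℝ) (ν : ℝ) (hν : ν ∈ Set.Ioo (0 : ℝ) 1)
    (j n m l n₁ : ℕ)
    (hp : ∀ k, l ≤ k → k ≤ l + n → 0 < p k ∧ p k < 1) :
    (∑ k ∈ Finset.Ico l (n + l), ∑ d ∈ Finset.Ico n₁ j,
        ν ^ ((m : ℝ) * ((k : ℝ) + ((d : ℝ) + 1) / (j : ℝ))) *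
          ∫ t in ((k : ℝ) + (d : ℝ) / (j : ℝ))..((k : ℝ) + ((d : ℝ) + 1) / (j : ℝ)),
            (∏ i ∈ Finset.range k, p i) * p k ^ (t - (k : ℝ)) * Real.log (1 / p k))
      + ∑ d ∈ Finset.range n₁,
          ν ^ ((m : ℝ) * (((n : ℝ) + (l : ℝ)) + ((d : ℝ) + 1) / (j : ℝ))) *
            ∫ t in (((n : ℝ) + (l : ℝ)) + (d : ℝ) / (j : ℝ))..
                (((n : ℝ) + (l : ℝ)) + ((d : ℝ) + 1) / (j : ℝ)),
              (∏ i ∈ Finset.range (n + l), p i) *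
                p (n + l) ^ (t - ((n : ℝ) + (l : ℝ))) * Real.log (1 / p (n + l))
    = (∑ k ∈ Finset.Ico l (n + l),
        ν ^ ((m : ℝ) * (k : ℝ)) * (∏ i ∈ Finset.range k, p i) *
          (1 - p k ^ ((1 : ℝ) / (j : ℝ))) *
          ∑ d ∈ Finset.Ico n₁ j,
            ν ^ (((d : ℝ) + 1) * (m : ℝ) / (j : ℝ)) * p k ^ ((d : ℝ) / (j : ℝ)))
      + ν ^ (((n : ℝ) + (l : ℝ)) * (m : ℝ)) * (∏ i ∈ Finset.range (n + l), p i) *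
          (1 - p (n + l) ^ ((1 : ℝ) / (j : ℝ))) *
          ∑ d ∈ Finset.range n₁,
            ν ^ (((d : ℝ) + 1) * (m : ℝ) / (j : ℝ)) *
              p (n + l) ^ ((d : ℝ) / (j : ℝ)) := by
  congr 1
  · refine sum_congr rfl fun k hk => ?_
    obtain ⟨hlk, hkn⟩ := mem_Ico.mp hk
    exact sum_discounted_integral_survival_density hν.1 (hp k hlk (by omega)).1 _ _ _ _ _
  · rw [mul_comm _ (m : ℝ)]
    exact sum_discounted_integral_survival_density hν.1 (hp (n + l) (by omega) (by omega)).1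
      _ _ _ _ _

/-- m-th moment of ν^{(⌊T_x·j⌋+1)/j} restricted to
{l + n₁/j ≤ T_x < n + l + n₁/j} under the constant force of mortality assumption. -/
theorem moment_mthly_insurance
    (p : ℕ → ℝ) (ν : ℝ) (hν : ν ∈ Set.Ioo (0 : ℝ) 1)
    (j n m l n₁ : ℕ) (hj : 1 ≤ j) (hn : 1 ≤ n) (hn₁ : n₁ < j)
    (hp : ∀ k, l ≤ k → k ≤ l + n → 0 < p k ∧ p k < 1) :
    (∑ k ∈ Finset.Ico l (n + l), ∑ d ∈ Finset.Ico n₁ j,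
        ν ^ ((m : ℝ) * ((k : ℝ) + ((d : ℝ) + 1) / (j : ℝ))) *
          ∫ t in ((k : ℝ) + (d : ℝ) / (j : ℝ))..((k : ℝ) + ((d : ℝ) + 1) / (j : ℝ)),
            (∏ i ∈ Finset.range k, p i) * p k ^ (t - (k : ℝ)) * Real.log (1 / p k))
      + ∑ d ∈ Finset.range n₁,
          ν ^ ((m : ℝ) * (((n : ℝ) + (l : ℝ)) + ((d : ℝ) + 1) / (j : ℝ))) *
            ∫ t in (((n : ℝ) + (l : ℝ)) + (d : ℝ) / (j : ℝ))..
                (((n : ℝ) + (l : ℝ)) + ((d : ℝ) + 1) / (j : ℝ)),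
              (∏ i ∈ Finset.range (n + l), p i) *
                p (n + l) ^ (t - ((n : ℝ) + (l : ℝ))) * Real.log (1 / p (n + l))
    = (∑ k ∈ Finset.Ico l (n + l),
        ν ^ ((m : ℝ) * (k : ℝ)) * (∏ i ∈ Finset.range k, p i) *
          (1 - p k ^ ((1 : ℝ) / (j : ℝ))) *
          ∑ d ∈ Finset.Ico n₁ j,
            ν ^ (((d : ℝ) + 1) * (m : ℝ) / (j : ℝ)) * p k ^ ((d : ℝ) / (j : ℝ)))
      + ν ^ (((n : ℝ) + (l : ℝ)) * (m : ℝ)) * (∏ i ∈ Finset.range (n + l), p i) *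
          (1 - p (n + l) ^ ((1 : ℝ) / (j : ℝ))) *
          ∑ d ∈ Finset.range n₁,
            ν ^ (((d : ℝ) + 1) * (m : ℝ) / (j : ℝ)) *
              p (n + l) ^ ((d : ℝ) / (j : ℝ)) :=
  moment_mthly_insurance_general p ν hν j n m l n₁ hp
end
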